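/- Assume every numerical semigroup T with e(T) ≥ m(T)/3 satisfies Wilf's conjecture. Let G be a positive integer and S a numerical semigroup of genus g ≤ G with c(S) > m(S) and e(S) ≥ m(S)/3 + (G − g). Then every descendant T of S with genus g(T) ≤ G satisfies Wilf's conjecture. -/

import Mathlib

/-!
Removing a right primitive element `a` from `T` keeps `T \ {a}` a numerical semigroup with
Frobenius number `a`; it raises the genus by one, keeps the multiplicity as long as the
multiplicity lies below the Frobenius number, and loses at most the primitive element `a`.
Hence along every descent from `S` the quantity `e + g` does not decrease and `m` is constant,
so a descendant `T` with `g(T) ≤ G` has `e(T) ≥ e(S) + g(S) - G ≥ m(T)/3`, and the assumed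
case of Wilf's conjecture applies.
-/

/-- A numerical semigroup: a cofinite submonoid of ℕ. -/
def IsNumericalSemigroup (S : Set ℕ) : Prop :=
  0 ∈ S ∧ (∀ a ∈ S, ∀ b ∈ S, a + b ∈ S) ∧ Sᶜ.Finite

/-- A primitive element: a nonzero element of `S` not a sum of two nonzero elements of `S`. -/
def IsPrimitive (S : Set ℕ) (a : ℕ) : Prop :=
  a ∈ S ∧ a ≠ 0 ∧ ∀ x ∈ S, ∀ y ∈ S, x ≠ 0 → y ≠ 0 → x + y ≠ a

/-- Frobenius number: the largest gap (as a natural number; `0` for `S = ℕ`). -/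
noncomputable def frob (S : Set ℕ) : ℕ := sSup Sᶜ

/-- Conductor `c = F + 1`. -/
noncomputable def nsCond (S : Set ℕ) : ℕ := frob S + 1

/-- Multiplicity: least nonzero element. -/
noncomputable def mult (S : Set ℕ) : ℕ := sInf {n | n ∈ S ∧ n ≠ 0}

/-- Genus: number of gaps. -/
noncomputable def genus (S : Set ℕ) : ℕ := Sᶜ.ncard

/-- Left part `L(S) = {s ∈ S | s < F(S)}`. -/
def leftPart (S : Set ℕ) : Set ℕ := {s | s ∈ S ∧ s < frob S}

/-- The set of primitive elements. -/
def prims (S : Set ℕ) : Set ℕ := {a | IsPrimitive S a}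

/-- Embedding dimension: number of primitive elements. -/
noncomputable def edim (S : Set ℕ) : ℕ := (prims S).ncard

/-- Number of left primitive elements. -/
noncomputable def eleft (S : Set ℕ) : ℕ := (prims S ∩ leftPart S).ncard

/-- Right primitive: primitive and greater than the Frobenius number. -/
def IsRightPrimitive (S : Set ℕ) (a : ℕ) : Prop := IsPrimitive S a ∧ frob S < a

/-- Child in the tree of numerical semigroups. -/
def IsChild (S S' : Set ℕ) : Prop := ∃ a, IsRightPrimitive S a ∧ S' = S \ {a}

/-- Descendant (possibly equal): reachable by removing right primitive elements. -/
def IsDescendant (S T : Set ℕ) : Prop := Relation.ReflTransGen IsChild S T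

/-- Wilf's conjecture for `S`. -/
def Wilf (S : Set ℕ) : Prop := nsCond S ≤ edim S * (leftPart S).ncard

/-- The ordinary semigroup `O_m = {0} ∪ (m + ℕ)`. -/
def ordinary (m : ℕ) : Set ℕ := {0} ∪ {n | m ≤ n}

lemma Set.compl_diff_singleton {α : Type*} (s : Set α) (a : α) : (s \ {a})ᶜ = insert a sᶜ :=
  Set.compl_sdiff

namespace IsNumericalSemigroup

variable {T : Set ℕ} (hT : IsNumericalSemigroup T)
include hT

lemma mem_of_frob_lt {n : ℕ} (h : frob T < n) : n ∈ T := by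
  by_contra hn
  exact (le_csSup hT.2.2.bddAbove hn).not_gt h

lemma mult_mem_and_ne_zero : mult T ∈ T ∧ mult T ≠ 0 :=
  Nat.sInf_mem (s := {n | n ∈ T ∧ n ≠ 0})
    ⟨frob T + 1, hT.mem_of_frob_lt (Nat.lt_succ_self _), Nat.succ_ne_zero _⟩

lemma prims_subset_Iic : prims T ⊆ Set.Iic (frob T + mult T) := by
  intro p hp
  by_contra hgt
  simp only [Set.mem_Iic, not_le] at hgt
  obtain ⟨hm, hm0⟩ := hT.mult_mem_and_ne_zero
  exact hp.2.2 (mult T) hm (p - mult T) (hT.mem_of_frob_lt (by omega)) hm0 (by omega) (by omega)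

lemma prims_finite : (prims T).Finite :=
  (Set.finite_Iic _).subset hT.prims_subset_Iic

variable {a : ℕ} (ha : IsRightPrimitive T a)
include ha

lemma diff_rightPrimitive : IsNumericalSemigroup (T \ {a}) := by
  obtain ⟨⟨-, ha0, haprim⟩, -⟩ := ha
  refine ⟨⟨hT.1, by simpa using ha0.symm⟩, ?_, ?_⟩
  · rintro x ⟨hx, hxa⟩ y ⟨hy, hya⟩
    refine ⟨hT.2.1 x hx y hy, ?_⟩
    rcases eq_or_ne x 0 with rfl | hx0
    · simpa using hya
    rcases eq_or_ne y 0 with rfl | hy0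
    · simpa using hxa
    · exact haprim x hx y hy hx0 hy0
  · rw [Set.compl_diff_singleton]
    exact hT.2.2.insert a

lemma frob_diff_rightPrimitive : frob (T \ {a}) = a := by
  have hcompl := Set.compl_diff_singleton T a
  refine le_antisymm (csSup_le ⟨a, by simp [hcompl]⟩ ?_)
    (le_csSup (hT.diff_rightPrimitive ha).2.2.bddAbove (by simp [hcompl]))
  intro x hx
  rw [hcompl] at hx
  rcases hx with rfl | hx
  · exact le_rfl
  · exact (le_csSup hT.2.2.bddAbove hx).trans ha.2.le

lemma mult_diff_rightPrimitive (hm : mult T ≤ frob T) : mult (T \ {a}) = mult T := by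
  obtain ⟨hmT, hm0⟩ := hT.mult_mem_and_ne_zero
  have hmem : mult T ∈ {n | n ∈ T \ {a} ∧ n ≠ 0} :=
    ⟨⟨hmT, fun h => by simp only [Set.mem_singleton_iff] at h; have := ha.2; omega⟩, hm0⟩
  refine le_antisymm (Nat.sInf_le hmem) ?_
  obtain ⟨⟨hT', -⟩, h0⟩ := Nat.sInf_mem ⟨_, hmem⟩
  exact Nat.sInf_le ⟨hT', h0⟩

lemma genus_diff_rightPrimitive : genus (T \ {a}) = genus T + 1 := by
  rw [genus, genus, Set.compl_diff_singleton,
    Set.ncard_insert_of_notMem (by simpa using ha.1.1) hT.2.2]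

lemma edim_le_edim_diff_rightPrimitive_add_one : edim T ≤ edim (T \ {a}) + 1 := by
  have hsub : prims T \ {a} ⊆ prims (T \ {a}) := by
    rintro p ⟨⟨hp, hp0, hpprim⟩, hpa⟩
    exact ⟨⟨hp, hpa⟩, hp0, fun x hx y hy => hpprim x hx.1 y hy.1⟩
  calc edim T ≤ (prims T \ {a}).ncard + ({a} : Set ℕ).ncard :=
        Set.ncard_le_ncard_sdiff_add_ncard _ _
    _ ≤ edim (T \ {a}) + 1 := by
        rw [Set.ncard_singleton]
        exact Nat.add_le_add_right
          (Set.ncard_le_ncard hsub (hT.diff_rightPrimitive ha).prims_finite) 1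

end IsNumericalSemigroup

lemma IsDescendant.mult_eq_and_edim_add_genus_le {S T : Set ℕ} (hST : IsDescendant S T)
    (hS : IsNumericalSemigroup S) (hm : mult S ≤ frob S) :
    IsNumericalSemigroup T ∧ mult T = mult S ∧ mult T ≤ frob T ∧
      edim S + genus S ≤ edim T + genus T := by
  induction hST with
  | refl => exact ⟨hS, rfl, hm, le_rfl⟩
  | tail _ hchild ih =>
    obtain ⟨a, ha, rfl⟩ := hchild
    obtain ⟨hU, hmU, hmfU, hsum⟩ := ih
    have hmult := hU.mult_diff_rightPrimitive ha hmfU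
    refine ⟨hU.diff_rightPrimitive ha, hmult.trans hmU, ?_, ?_⟩
    · rw [hmult, hU.frob_diff_rightPrimitive ha]
      exact hmfU.trans_lt ha.2 |>.le
    · have := hU.edim_le_edim_diff_rightPrimitive_add_one ha
      rw [hU.genus_diff_rightPrimitive ha]
      omega

theorem stmt7_general
    (hyp : ∀ T : Set ℕ, IsNumericalSemigroup T → (edim T : ℚ) ≥ (mult T : ℚ) / 3 → Wilf T)
    (G : ℕ) (S : Set ℕ) (hS : IsNumericalSemigroup S)
    (hc : mult S < nsCond S)
    (he : (edim S : ℚ) ≥ (mult S : ℚ) / 3 + ((G : ℚ) - (genus S : ℚ))) :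
    ∀ T : Set ℕ, IsDescendant S T → genus T ≤ G → Wilf T := by
  intro T hST hgT
  obtain ⟨hT, hmT, -, hsum⟩ := hST.mult_eq_and_edim_add_genus_le hS (Nat.lt_succ_iff.mp hc)
  refine hyp T hT ?_
  have hsum' : (edim S + genus S : ℚ) ≤ edim T + genus T := by exact_mod_cast hsum
  have hgT' : (genus T : ℚ) ≤ G := by exact_mod_cast hgT
  rw [hmT]
  linarith

theorem stmt7
    (hyp : ∀ T : Set ℕ, IsNumericalSemigroup T → (edim T : ℚ) ≥ (mult T : ℚ) / 3 → Wilf T)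
    (G : ℕ) (hG : 1 ≤ G) (S : Set ℕ) (hS : IsNumericalSemigroup S)
    (hg : genus S ≤ G) (hc : mult S < nsCond S)
    (he : (edim S : ℚ) ≥ (mult S : ℚ) / 3 + ((G : ℚ) - (genus S : ℚ))) :
    ∀ T : Set ℕ, IsDescendant S T → genus T ≤ G → Wilf T :=
  stmt7_general hyp G S hS hc he
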